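/- The logic mCi is not axiomatizable by a finite Set-Fmla Hilbert system: there is no finite Set-Fmla Hilbert system H over Σ such that ⊢_H = ⊢_{H_mCi}. -/
import Mathlib


/-- Formulas over the signature Σ with unary ¬, ∘ and binary ∧, ∨, →,
freely generated from a denumerable set of propositional variables. -/
inductive Fm : Type where
  | var : ℕ → Fm
  | neg : Fm → Fm
  | circ : Fm → Fm
  | conj : Fm → Fm → Fm
  | disj : Fm → Fm → Fm
  | imp : Fm → Fm → Fm
deriving DecidableEq

/-- Substitutions act homomorphically on formulas. -/
def subst (σ : ℕ → Fm) : Fm → Fm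
  | .var n => σ n
  | .neg φ => .neg (subst σ φ)
  | .circ φ => .circ (subst σ φ)
  | .conj φ ψ => .conj (subst σ φ) (subst σ ψ)
  | .disj φ ψ => .disj (subst σ φ) (subst σ ψ)
  | .imp φ ψ => .imp (subst σ φ) (subst σ ψ)

/-- A Set-Fmla rule schema: a finite antecedent and a single succedent formula. -/
abbrev Rule : Type := Finset Fm × Fm

/-- Derivability in a Set-Fmla Hilbert system: `Derives H Γ φ` holds iff φ can be
obtained from members of Γ by finitely many applications of substitution instances
of rules of `H`. -/
inductive Derives (H : Set Rule) : Set Fm → Fm → Prop where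
  | prem : ∀ {Γ : Set Fm} {φ : Fm}, φ ∈ Γ → Derives H Γ φ
  | rule : ∀ {Γ : Set Fm} (r : Rule) (σ : ℕ → Fm), r ∈ H →
      (∀ ψ ∈ r.1, Derives H Γ (subst σ ψ)) → Derives H Γ (subst σ r.2)

/-- Iterated negation: `negIter j φ = ¬^j φ`. -/
def negIter : ℕ → Fm → Fm
  | 0, φ => φ
  | n + 1, φ => .neg (negIter n φ)

/-- (Ax10)  p ∨ ¬p. -/
def ax10 : Fm := .disj (.var 0) (.neg (.var 0))
/-- (bc1)  ∘p → (p → (¬p → q)). -/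
def bc1 : Fm := .imp (.circ (.var 0)) (.imp (.var 0) (.imp (.neg (.var 0)) (.var 1)))
/-- (ci)  ¬∘p → (p ∧ ¬p). -/
def ci : Fm := .imp (.neg (.circ (.var 0))) (.conj (.var 0) (.neg (.var 0)))
/-- (ci_j)  ∘¬^j∘p. -/
def cij (j : ℕ) : Fm := .circ (negIter j (.circ (.var 0)))

/-- `HmCi B` : the Hilbert system extending the positive-classical base `B`
with (Ax10), (bc1), (ci) and (ci_j) for every j ≥ 0. -/
def HmCi (B : Set Rule) : Set Rule :=
  B ∪ {(∅, ax10), (∅, bc1), (∅, ci)} ∪ {r : Rule | ∃ j : ℕ, r = (∅, cij j)}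

/-- `HkSys B k` : the Hilbert system extending the positive-classical base `B`
with (Ax10), (bc1), (ci) and (ci_j) for 0 ≤ j ≤ k only. -/
def HkSys (B : Set Rule) (k : ℕ) : Set Rule :=
  B ∪ {(∅, ax10), (∅, bc1), (∅, ci)} ∪ {r : Rule | ∃ j ≤ k, r = (∅, cij j)}

/-- Carrier V_k = {1,…,2(k+1)} of the matrix M_k. -/
def Vk (k : ℕ) : Set ℕ := {x | 1 ≤ x ∧ x ≤ 2 * (k + 1)}
/-- Designated set D_k = {k+2,…,2(k+1)} of the matrix M_k. -/
def Dk (k : ℕ) : Set ℕ := {x | k + 2 ≤ x ∧ x ≤ 2 * (k + 1)}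

instance (k x : ℕ) : Decidable (x ∈ Dk k) :=
  inferInstanceAs (Decidable (k + 2 ≤ x ∧ x ≤ 2 * (k + 1)))

/-- Disjunction of M_k: 1 if both arguments are undesignated, k+2 otherwise. -/
def mOr (k x y : ℕ) : ℕ := if x ∉ Dk k ∧ y ∉ Dk k then 1 else k + 2
/-- Conjunction of M_k: k+2 if both arguments are designated, 1 otherwise. -/
def mAnd (k x y : ℕ) : ℕ := if x ∈ Dk k ∧ y ∈ Dk k then k + 2 else 1
/-- Implication of M_k: 1 if the first argument is designated and the second is not,
k+2 otherwise. -/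
def mImp (k x y : ℕ) : ℕ := if x ∈ Dk k ∧ y ∉ Dk k then 1 else k + 2
/-- Consistency operator of M_k: 1 at 2(k+1), k+2 elsewhere. -/
def mCirc (k x : ℕ) : ℕ := if x = 2 * (k + 1) then 1 else k + 2
/-- Negation of M_k: ¬x = k+2 if x ∈ {1, 2(k+1)}; ¬x = x + (k+1) if 2 ≤ x ≤ k+1;
¬x = x − k if k+2 ≤ x ≤ 2k+1 (values outside the carrier are irrelevant). -/
def mNeg (k x : ℕ) : ℕ :=
  if x = 1 ∨ x = 2 * (k + 1) then k + 2
  else if 2 ≤ x ∧ x ≤ k + 1 then x + (k + 1)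
  else if k + 2 ≤ x ∧ x ≤ 2 * k + 1 then x - k
  else x

/-- Classical conjunction on the two-element Boolean matrix B₂ (carrier {0,1}). -/
def b2And (x y : ℕ) : ℕ := if x = 1 ∧ y = 1 then 1 else 0
/-- Classical disjunction on B₂. -/
def b2Or (x y : ℕ) : ℕ := if x = 1 ∨ y = 1 then 1 else 0
/-- Classical implication on B₂. -/
def b2Imp (x y : ℕ) : ℕ := if x = 1 ∧ y = 0 then 0 else 1
/-- The map h : V_k → {0,1} sending designated values to 1 and the rest to 0. -/
def hmap (k x : ℕ) : ℕ := if x ∈ Dk k then 1 else 0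

/-- Homomorphic valuations on the matrix M_k. -/
def IsValMk (k : ℕ) (v : Fm → ℕ) : Prop :=
  (∀ φ : Fm, v φ ∈ Vk k) ∧
  (∀ φ ψ : Fm, v (.conj φ ψ) = mAnd k (v φ) (v ψ)) ∧
  (∀ φ ψ : Fm, v (.disj φ ψ) = mOr k (v φ) (v ψ)) ∧
  (∀ φ ψ : Fm, v (.imp φ ψ) = mImp k (v φ) (v ψ)) ∧
  (∀ φ : Fm, v (.neg φ) = mNeg k (v φ)) ∧
  (∀ φ : Fm, v (.circ φ) = mCirc k (v φ))

/-- Valuations on the two-element Boolean matrix B₂ over the signature {∧,∨,→}: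
maps into {0,1} commuting with the positive connectives. -/
def IsValB2 (v : Fm → ℕ) : Prop :=
  (∀ φ : Fm, v φ = 0 ∨ v φ = 1) ∧
  (∀ φ ψ : Fm, v (.conj φ ψ) = b2And (v φ) (v ψ)) ∧
  (∀ φ ψ : Fm, v (.disj φ ψ) = b2Or (v φ) (v ψ)) ∧
  (∀ φ ψ : Fm, v (.imp φ ψ) = b2Imp (v φ) (v ψ))

/-- A rule is sound for B₂ when every B₂-valuation designating all its premises
designates its conclusion. -/
def SoundB2 (r : Rule) : Prop :=
  ∀ v : Fm → ℕ, IsValB2 v → (∀ ψ ∈ r.1, v ψ = 1) → v r.2 = 1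

/-- Positive formulas: built from variables using only ∧, ∨, →. -/
inductive Positive : Fm → Prop where
  | var : ∀ n : ℕ, Positive (.var n)
  | conj : ∀ {φ ψ : Fm}, Positive φ → Positive ψ → Positive (.conj φ ψ)
  | disj : ∀ {φ ψ : Fm}, Positive φ → Positive ψ → Positive (.disj φ ψ)
  | imp : ∀ {φ ψ : Fm}, Positive φ → Positive ψ → Positive (.imp φ ψ)


section Aux

theorem subst_id (φ : Fm) : subst .var φ = φ := by
  induction φ <;> simp [subst, *]

theorem subst_comp (σ τ : ℕ → Fm) (φ : Fm) :
    subst σ (subst τ φ) = subst (fun n => subst σ (τ n)) φ := by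
  induction φ <;> simp [subst, *]

theorem Derives.mono {H H' : Set Rule} (hs : H ⊆ H') {Γ : Set Fm} {φ : Fm}
    (h : Derives H Γ φ) : Derives H' Γ φ := by
  induction h with
  | prem h => exact .prem h
  | rule r σ hr hp ih => exact .rule r σ (hs hr) ih

theorem Derives.cut {H : Set Rule} {Γ Δ : Set Fm} {φ : Fm}
    (hΔ : ∀ ψ ∈ Δ, Derives H Γ ψ) (h : Derives H Δ φ) : Derives H Γ φ := by
  induction h with
  | prem h => exact hΔ _ h
  | rule r σ hr hp ih => exact .rule r σ hr ih

theorem Derives.substitute {H : Set Rule} {Γ : Set Fm} {φ : Fm} (σ : ℕ → Fm)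
    (h : Derives H Γ φ) : Derives H (subst σ '' Γ) (subst σ φ) := by
  induction h with
  | prem h => exact .prem ⟨_, h, rfl⟩
  | rule r τ hr hp ih =>
      rw [subst_comp]
      refine .rule r (fun n => subst σ (τ n)) hr (fun ψ hψ => ?_)
      rw [← subst_comp]; exact ih ψ hψ

theorem HkSys_mono (B : Set Rule) {k k' : ℕ} (h : k ≤ k') : HkSys B k ⊆ HkSys B k' := by
  rintro r (hr | ⟨j, hj, rfl⟩)
  · exact Or.inl hr
  · exact Or.inr ⟨j, le_trans hj h, rfl⟩

theorem exists_bound {α : Type*} (s : Finset α) (P : ℕ → α → Prop)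
    (mono : ∀ {k k'} (a : α), k ≤ k' → P k a → P k' a)
    (h : ∀ a ∈ s, ∃ k, P k a) : ∃ k, ∀ a ∈ s, P k a := by
  classical
  induction s using Finset.induction with
  | empty => exact ⟨0, by simp⟩
  | @insert a s ha ih =>
      obtain ⟨k1, h1⟩ := h a (Finset.mem_insert_self a s)
      obtain ⟨k2, h2⟩ := ih (fun b hb => h b (Finset.mem_insert_of_mem hb))
      refine ⟨max k1 k2, fun b hb => ?_⟩
      rcases Finset.mem_insert.1 hb with rfl | hb
      · exact mono b (le_max_left _ _) h1
      · exact mono b (le_max_right _ _) (h2 b hb)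

theorem mCi_to_bounded {B : Set Rule} {Γ : Set Fm} {φ : Fm}
    (h : Derives (HmCi B) Γ φ) : ∃ k, Derives (HkSys B k) Γ φ := by
  induction h with
  | prem h => exact ⟨0, .prem h⟩
  | rule r σ hr hp ih =>
      obtain ⟨k0, hk0⟩ := exists_bound r.1
        (fun k ψ => Derives (HkSys B k) Γ (subst σ ψ))
        (fun ψ hle hd => hd.mono (HkSys_mono B hle)) ih
      rcases hr with hr | ⟨j, rfl⟩
      · exact ⟨k0, .rule r σ (Or.inl hr) hk0⟩
      · refine ⟨max k0 j, .rule _ σ (Or.inr ⟨j, le_max_right _ _, rfl⟩)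
          (fun ψ hψ => (hk0 ψ hψ).mono (HkSys_mono B (le_max_left _ _)))⟩

theorem mem_Dk {k x : ℕ} : x ∈ Dk k ↔ k + 2 ≤ x ∧ x ≤ 2 * (k + 1) := Iff.rfl

theorem mem_Vk {k x : ℕ} : x ∈ Vk k ↔ 1 ≤ x ∧ x ≤ 2 * (k + 1) := Iff.rfl

theorem isValMk_subst {k : ℕ} {v : Fm → ℕ} (σ : ℕ → Fm) (hv : IsValMk k v) :
    IsValMk k (fun φ => v (subst σ φ)) := by
  obtain ⟨h0, h1, h2, h3, h4, h5⟩ := hv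
  exact ⟨fun φ => h0 _, fun φ ψ => h1 _ _, fun φ ψ => h2 _ _, fun φ ψ => h3 _ _,
    fun φ => h4 _, fun φ => h5 _⟩

theorem isValB2_hmap {k : ℕ} {v : Fm → ℕ} (hv : IsValMk k v) :
    IsValB2 (fun φ => hmap k (v φ)) := by
  obtain ⟨h0, h1, h2, h3, h4, h5⟩ := hv
  refine ⟨fun φ => ?_, fun φ ψ => ?_, fun φ ψ => ?_, fun φ ψ => ?_⟩
  · dsimp only; unfold hmap; split_ifs <;> simp
  · dsimp only; rw [h1]; unfold hmap mAnd b2And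
    simp only [mem_Dk]; split_ifs <;> (try simp_all) <;> omega
  · dsimp only; rw [h2]; unfold hmap mOr b2Or
    simp only [mem_Dk]; split_ifs <;> (try simp_all) <;> omega
  · dsimp only; rw [h3]; unfold hmap mImp b2Imp
    simp only [mem_Dk]; split_ifs <;> (try simp_all) <;> omega

theorem negpow {k : ℕ} (hk : 1 ≤ k) :
    ∀ j ≤ 2 * k, (mNeg k)^[j] 1 = if j % 2 = 0 then j / 2 + 1 else k + 2 + j / 2 := by
  intro j
  induction j with
  | zero => simp
  | succ j ih =>
      intro hj
      rw [Function.iterate_succ_apply', ih (by omega)]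
      by_cases hp : j % 2 = 0
      · rw [if_pos hp, if_neg (by omega)]
        unfold mNeg; split_ifs <;> omega
      · rw [if_neg hp, if_pos (by omega)]
        unfold mNeg; split_ifs <;> omega

theorem v_negIter {k : ℕ} {v : Fm → ℕ} (hv : IsValMk k v) (j : ℕ) (φ : Fm) :
    v (negIter j φ) = (mNeg k)^[j] (v φ) := by
  induction j with
  | zero => rfl
  | succ j ih =>
      rw [Function.iterate_succ_apply']
      exact (hv.2.2.2.2.1 _).trans (by rw [ih])

theorem mImp_des {k a b : ℕ} (h : a ∈ Dk k → b ∈ Dk k) : mImp k a b ∈ Dk k := by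
  rw [mImp, if_neg (fun hc => hc.2 (h hc.1))]
  exact ⟨le_refl _, by omega⟩

theorem mCirc_des {k a : ℕ} (h : a ≠ 2 * (k + 1)) : mCirc k a ∈ Dk k := by
  rw [mCirc, if_neg h]; exact ⟨le_refl _, by omega⟩

theorem mCirc_undes {k : ℕ} : mCirc k (2 * (k + 1)) ∉ Dk k := by
  rw [mCirc, if_pos rfl]; intro h; exact absurd h.1 (by omega)

theorem mNeg_undes {k a : ℕ} (h1 : a ∈ Dk k) (h2 : a ≠ 2 * (k + 1)) :
    mNeg k a ∉ Dk k := by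
  simp only [mem_Dk] at *
  unfold mNeg; split_ifs <;> omega

theorem mNeg_des {k a : ℕ} (h1 : a ∈ Vk k) (h2 : a ∉ Dk k) : mNeg k a ∈ Dk k := by
  simp only [mem_Vk, mem_Dk] at *
  unfold mNeg; split_ifs <;> omega

theorem ruleSound {B : Set Rule} (hsnd : ∀ r ∈ B, SoundB2 r) {k : ℕ} (hk : 1 ≤ k)
    {r : Rule} (hr : r ∈ HkSys B k) (v : Fm → ℕ) (hv : IsValMk k v)
    (hp : ∀ ψ ∈ r.1, v ψ ∈ Dk k) : v r.2 ∈ Dk k := by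
  obtain ⟨h0, h1, h2, h3, h4, h5⟩ := hv
  rcases hr with (hr | hr) | ⟨j, hj, rfl⟩
  · -- rule of B
    have hb2 := isValB2_hmap ⟨h0, h1, h2, h3, h4, h5⟩
    have := hsnd r hr _ hb2 (fun ψ hψ => by
      simp only [hmap, if_pos (hp ψ hψ)])
    by_contra hc
    simp only [hmap, if_neg hc] at this
    exact absurd this (by omega)
  · -- the three fixed axioms
    rcases hr with rfl | rfl | rfl
    · -- ax10
      show v ax10 ∈ Dk k
      rw [ax10, h2, h4, mOr]
      split_ifs with h
      · exact absurd (mNeg_des (h0 _) h.1) h.2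
      · exact ⟨le_refl _, by omega⟩
    · -- bc1
      show v bc1 ∈ Dk k
      rw [bc1, h3, h3, h3, h5, h4]
      refine mImp_des fun hc => mImp_des fun hx => mImp_des fun hn => ?_
      have hne : v (.var 0) ≠ 2 * (k + 1) := by
        rintro he; rw [he] at hc; exact mCirc_undes hc
      exact absurd hn (mNeg_undes hx hne)
    · -- ci
      show v ci ∈ Dk k
      rw [ci, h3, h1, h4, h4, h5]
      refine mImp_des fun hn => ?_
      rcases eq_or_ne (v (.var 0)) (2 * (k + 1)) with he | he
      · have hx : v (.var 0) ∈ Dk k := by rw [he]; exact ⟨by omega, le_refl _⟩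
        have hnx : mNeg k (v (.var 0)) ∈ Dk k := by
          rw [he, mNeg, if_pos (Or.inr rfl)]; exact ⟨le_refl _, by omega⟩
        rw [mAnd, if_pos ⟨hx, hnx⟩]; exact ⟨le_refl _, by omega⟩
      · exfalso
        rw [mCirc, if_neg he] at hn
        revert hn
        refine mNeg_undes ⟨le_refl _, by omega⟩ (by omega)
  · -- cij j, j ≤ k
    show v (cij j) ∈ Dk k
    rw [cij, h5, v_negIter ⟨h0, h1, h2, h3, h4, h5⟩, h5]
    refine mCirc_des ?_
    rcases eq_or_ne (v (.var 0)) (2 * (k + 1)) with he | he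
    · rw [mCirc, if_pos he, negpow hk j (by omega)]
      split_ifs <;> omega
    · have h2' : mCirc k (v (.var 0)) = mNeg k 1 := by
        rw [mCirc, if_neg he]; unfold mNeg; split_ifs <;> omega
      rw [h2', ← Function.iterate_succ_apply, negpow hk (j + 1) (by omega)]
      split_ifs <;> omega

theorem soundMk {B : Set Rule} (hsnd : ∀ r ∈ B, SoundB2 r) {k : ℕ} (hk : 1 ≤ k)
    {Γ : Set Fm} {φ : Fm} (h : Derives (HkSys B k) Γ φ)
    (v : Fm → ℕ) (hv : IsValMk k v) (hΓ : ∀ ψ ∈ Γ, v ψ ∈ Dk k) : v φ ∈ Dk k := by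
  induction h with
  | prem h => exact hΓ _ h
  | rule r σ hr hpr ih =>
      exact ruleSound hsnd hk hr (fun ψ => v (subst σ ψ)) (isValMk_subst σ hv)
        (fun ψ hψ => ih ψ hψ)

def valMk (k : ℕ) : Fm → ℕ
  | .var _ => 2 * (k + 1)
  | .neg φ => mNeg k (valMk k φ)
  | .circ φ => mCirc k (valMk k φ)
  | .conj φ ψ => mAnd k (valMk k φ) (valMk k ψ)
  | .disj φ ψ => mOr k (valMk k φ) (valMk k ψ)
  | .imp φ ψ => mImp k (valMk k φ) (valMk k ψ)

theorem valMk_isVal (k : ℕ) : IsValMk k (valMk k) := by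
  refine ⟨fun φ => ?_, fun _ _ => rfl, fun _ _ => rfl, fun _ _ => rfl,
    fun _ => rfl, fun _ => rfl⟩
  induction φ with
  | var n => simp only [valMk, mem_Vk]; omega
  | neg φ ih =>
      show mNeg k (valMk k φ) ∈ Vk k
      simp only [mem_Vk] at ih ⊢
      unfold mNeg; split_ifs <;> omega
  | circ φ ih =>
      show mCirc k (valMk k φ) ∈ Vk k
      simp only [mem_Vk]; unfold mCirc; split_ifs <;> omega
  | conj φ ψ ih1 ih2 =>
      show mAnd k _ _ ∈ Vk k
      simp only [mem_Vk]; unfold mAnd; split_ifs <;> omega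
  | disj φ ψ ih1 ih2 =>
      show mOr k _ _ ∈ Vk k
      simp only [mem_Vk]; unfold mOr; split_ifs <;> omega
  | imp φ ψ ih1 ih2 =>
      show mImp k _ _ ∈ Vk k
      simp only [mem_Vk]; unfold mImp; split_ifs <;> omega

theorem valMk_cij {k : ℕ} (hk : 1 ≤ k) : valMk k (cij (2 * k + 1)) = 1 := by
  have h1 : valMk k (Fm.circ (.var 0)) = 1 := by
    show mCirc k (2 * (k + 1)) = 1
    rw [mCirc, if_pos rfl]
  have h2 : valMk k (negIter (2 * k + 1) (Fm.circ (.var 0))) = 2 * (k + 1) := by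
    rw [v_negIter (valMk_isVal k), h1, Function.iterate_succ_apply',
      negpow hk (2 * k) (le_refl _)]
    rw [if_pos (by omega)]
    unfold mNeg; split_ifs <;> omega
  show mCirc k _ = 1
  rw [h2, mCirc, if_pos rfl]

end Aux

/-- mCi is not axiomatizable by a finite Set-Fmla Hilbert system. -/
theorem stmt12 (B : Set Rule) (hBfin : B.Finite)
    (hpos : ∀ r ∈ B, (∀ ψ ∈ r.1, Positive ψ) ∧ Positive r.2)
    (hsnd : ∀ r ∈ B, SoundB2 r) :
    ¬ ∃ H : Set Rule, H.Finite ∧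
        ∀ (Γ : Set Fm) (φ : Fm), Derives H Γ φ ↔ Derives (HmCi B) Γ φ := by
  rintro ⟨H, hHfin, heq⟩
  have hder : ∀ r ∈ hHfin.toFinset, ∃ k, Derives (HkSys B k) (↑r.1) r.2 := by
    intro r hr
    rw [Set.Finite.mem_toFinset] at hr
    have h1 : Derives H (↑r.1 : Set Fm) r.2 := by
      have := Derives.rule (H := H) r .var hr
        (fun ψ hψ => by rw [subst_id]; exact .prem (Finset.mem_coe.2 hψ))
      rwa [subst_id] at this
    exact mCi_to_bounded ((heq _ _).1 h1)
  obtain ⟨K0, hK0⟩ := exists_bound hHfin.toFinset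
    (fun k (r : Rule) => Derives (HkSys B k) (↑r.1) r.2)
    (fun r hle hd => hd.mono (HkSys_mono B hle)) hder
  set K := max K0 1 with hK
  have hK1 : 1 ≤ K := le_max_right _ _
  have hHK : ∀ r ∈ H, Derives (HkSys B K) (↑r.1) r.2 := fun r hr =>
    (hK0 r (hHfin.mem_toFinset.2 hr)).mono (HkSys_mono B (le_max_left _ _))
  have htrans : ∀ {Γ : Set Fm} {φ : Fm}, Derives H Γ φ → Derives (HkSys B K) Γ φ := by
    intro Γ φ h
    induction h with
    | prem h => exact .prem h
    | rule r σ hr hp ih =>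
        refine Derives.cut ?_ ((hHK r hr).substitute σ)
        rintro ψ ⟨χ, hχ, rfl⟩
        exact ih χ (Finset.mem_coe.1 hχ)
  have hmci : Derives (HmCi B) ∅ (cij (2 * K + 1)) := by
    have := Derives.rule (H := HmCi B) (Γ := ∅) (∅, cij (2 * K + 1)) .var
      (Or.inr ⟨2 * K + 1, rfl⟩)
      (fun ψ hψ => absurd hψ (Finset.notMem_empty ψ))
    rwa [subst_id] at this
  have hbd : Derives (HkSys B K) ∅ (cij (2 * K + 1)) := htrans ((heq _ _).2 hmci)
  have hval := soundMk hsnd hK1 hbd (valMk K) (valMk_isVal K)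
    (fun ψ h => absurd h (Set.notMem_empty ψ))
  rw [valMk_cij hK1] at hval
  exact absurd hval.1 (by omega)
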